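/- arXiv:2512.11803 — 2 statements merged into one kernel-verified Lean document; each statement's English description precedes it below -/
import Mathlib

section
/- The family 𝒜 of achievement sets is closed in the hyperspace of nonempty compact subsets of [0,1] with the Hausdorff metric: if (E^{(n)}) is a sequence of sets in 𝒜 converging in the Hausdorff distance to a nonempty compact set S ⊆ [0,1], then S ∈ 𝒜. -/
open Metric Filter

/-- The achievement set of a series: the set of all its subsums. -/
def achievementSet (a : ℕ → ℝ) : Set ℝ :=
  {x | ∃ A : Set ℕ, x = ∑' n : A, a n}

/-- The family of achievement sets of convergent series of non-negative terms with sum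
at most `1`. -/
def achvFamily : Set (Set ℝ) :=
  {E | ∃ a : ℕ → ℝ, (∀ n, 0 ≤ a n) ∧ Summable a ∧ (∑' n, a n) ≤ 1 ∧ E = achievementSet a}

/-!
Truncating a series and sorting the remaining finitely many terms moves its achievement set by
at most the discarded tail, so the `E⁽ⁿ⁾` may be replaced by `E(pₙ)` with `pₙ` non-increasing.
By compactness of `[0,1]^ℕ`, along a subsequence `pₙ → b` termwise and `∑ pₙ → τ`, and
`∑ b ≤ τ`. The mass `δ = τ - ∑ b` lost to ever smaller terms turns into an interval:
`E(pₙ) → E(b) + [0, δ]`. Split at an index `k`: the heads converge termwise, while the tails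
have all terms at most `pₙ k → b k`, so their subsums are `b k`-dense in an interval whose
length tends to that of the tail of `b` plus `δ`. Finally `E(b) + [0, δ]` is the achievement set
of `b` interleaved with the geometric series `δ / 2 ^ (n + 1)`, whose subsums fill `[0, δ]`.
-/

open Set Topology
open scoped Pointwise

theorem hausdorffDist_add_add_le {E : Type*} [SeminormedAddCommGroup E] {s t s' t' : Set E}
    (hs : hausdorffEDist s s' ≠ ⊤) (ht : hausdorffEDist t t' ≠ ⊤) :
    hausdorffDist (s + t) (s' + t') ≤ hausdorffDist s s' + hausdorffDist t t' := by
  have key : ∀ {s t s' t' : Set E}, hausdorffEDist s s' ≠ ⊤ → hausdorffEDist t t' ≠ ⊤ →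
      ∀ x ∈ s + t, infDist x (s' + t') ≤ hausdorffDist s s' + hausdorffDist t t' := by
    rintro s t s' t' hs ht _ ⟨a, ha, b, hb, rfl⟩
    refine le_of_forall_pos_lt_add fun ε hε => ?_
    obtain ⟨a', ha', haa'⟩ :=
      exists_dist_lt_of_hausdorffDist_lt ha (lt_add_of_pos_right _ (half_pos hε)) hs
    obtain ⟨b', hb', hbb'⟩ :=
      exists_dist_lt_of_hausdorffDist_lt hb (lt_add_of_pos_right _ (half_pos hε)) ht
    calc infDist (a + b) (s' + t') ≤ dist (a + b) (a' + b') :=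
          infDist_le_dist_of_mem (add_mem_add ha' hb')
      _ ≤ dist a a' + dist b b' := dist_add_add_le a b a' b'
      _ < _ := by linarith
  refine hausdorffDist_le_of_infDist (add_nonneg hausdorffDist_nonneg hausdorffDist_nonneg)
    (key hs ht) ?_
  rw [hausdorffDist_comm, hausdorffDist_comm (s := t)]
  exact key (by rwa [hausdorffEDist_comm]) (by rwa [hausdorffEDist_comm])

theorem hausdorffDist_Icc_zero_le {x y : ℝ} (hx : 0 ≤ x) (hy : 0 ≤ y) :
    hausdorffDist (Icc 0 x) (Icc 0 y) ≤ |x - y| := by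
  have key : ∀ {x y : ℝ}, 0 ≤ y → ∀ z ∈ Icc 0 x, ∃ w ∈ Icc 0 y, dist z w ≤ |x - y| := by
    intro x y hy z hz
    refine ⟨min z y, ⟨le_min hz.1 hy, min_le_right z y⟩, ?_⟩
    rw [Real.dist_eq, abs_of_nonneg (sub_nonneg.2 (min_le_left z y))]
    rcases min_choice z y with h | h <;> rw [h] <;>
      linarith [abs_nonneg (x - y), le_abs_self (x - y), hz.2]
  refine hausdorffDist_le_of_mem_dist (abs_nonneg _) (key hy) fun z hz => ?_
  rw [abs_sub_comm]
  exact key hx z hz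

variable {f g : ℕ → ℝ}

theorem achievementSet_eq_range (f : ℕ → ℝ) :
    achievementSet f = range fun A : Set ℕ => ∑' n, A.indicator f n := by
  ext x
  simp only [achievementSet, mem_ofPred_eq, mem_range, tsum_subtype, eq_comm]

theorem sum_range_mem_achievementSet (f : ℕ → ℝ) (m : ℕ) :
    ∑ n ∈ Finset.range m, f n ∈ achievementSet f := by
  rw [achievementSet_eq_range, sum_eq_tsum_indicator, Finset.coe_range]
  exact mem_range_self _

theorem tsum_mem_achievementSet (f : ℕ → ℝ) : ∑' n, f n ∈ achievementSet f :=
  ⟨univ, (tsum_univ f).symm⟩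

theorem zero_mem_achievementSet (f : ℕ → ℝ) : 0 ∈ achievementSet f := by
  simpa using sum_range_mem_achievementSet f 0

theorem achievementSet_nonempty (f : ℕ → ℝ) : (achievementSet f).Nonempty :=
  ⟨0, zero_mem_achievementSet f⟩

theorem achievementSet_subset_Icc (hf0 : ∀ n, 0 ≤ f n) (hf : Summable f) :
    achievementSet f ⊆ Icc 0 (∑' n, f n) := by
  rw [achievementSet_eq_range]
  rintro _ ⟨A, rfl⟩
  exact ⟨tsum_nonneg fun n => indicator_nonneg (fun n _ => hf0 n) n,
    (hf.indicator A).tsum_le_tsum (fun n => indicator_le_self' (fun n _ => hf0 n) n) hf⟩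

theorem isBounded_achievementSet (hf0 : ∀ n, 0 ≤ f n) (hf : Summable f) :
    Bornology.IsBounded (achievementSet f) :=
  (isBounded_Icc _ _).subset (achievementSet_subset_Icc hf0 hf)

theorem isCompact_achievementSet (hf : Summable f) : IsCompact (achievementSet f) := by
  have hsurj : Function.Surjective fun x : ℕ → Bool => {n | x n} :=
    fun A => by classical exact ⟨fun n => decide (n ∈ A), by simp⟩
  rw [achievementSet_eq_range, ← hsurj.range_comp]
  refine isCompact_range (continuous_tsum (fun n => ?_) hf.abs fun n x => ?_)
  · have : (fun x : ℕ → Bool => {m | x m}.indicator f n) =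
        (fun b : Bool => if b then f n else 0) ∘ fun x => x n := by
      ext x; simp [indicator_apply]
    exact this ▸ continuous_of_discreteTopology.comp (continuous_apply n)
  · exact (norm_indicator_le_norm_self f n).trans (Real.norm_eq_abs _).le

theorem achievementSet_eq_add_indicator_compl (hf : Summable f) (s : Set ℕ) :
    achievementSet f = achievementSet (s.indicator f) + achievementSet (sᶜ.indicator f) := by
  have key : ∀ A B : Set ℕ, ∑' n, A.indicator (s.indicator f) n +
      ∑' n, B.indicator (sᶜ.indicator f) n = ∑' n, (A ∩ s ∪ B \ s).indicator f n := by
    intro A B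
    rw [← ((hf.indicator s).indicator A).tsum_add ((hf.indicator sᶜ).indicator B)]
    congr 1; ext n
    by_cases hA : n ∈ A <;> by_cases hB : n ∈ B <;> by_cases hs : n ∈ s <;> simp [hA, hB, hs]
  simp only [achievementSet_eq_range]
  ext x
  constructor
  · rintro ⟨A, rfl⟩
    exact ⟨_, ⟨A, rfl⟩, _, ⟨A, rfl⟩, (key A A).trans (by rw [inter_union_sdiff])⟩
  · rintro ⟨_, ⟨A, rfl⟩, _, ⟨B, rfl⟩, rfl⟩
    exact ⟨_, (key A B).symm⟩

theorem hausdorffDist_achievementSet_le (hf : Summable f) (hg : Summable g) :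
    hausdorffDist (achievementSet f) (achievementSet g) ≤ ∑' n, |f n - g n| := by
  have key : ∀ A : Set ℕ, dist (∑' n, A.indicator f n) (∑' n, A.indicator g n) ≤
      ∑' n, |f n - g n| := by
    intro A
    rw [Real.dist_eq, ← (hf.indicator A).tsum_sub (hg.indicator A), ← Real.norm_eq_abs]
    refine tsum_of_norm_bounded (hf.sub hg).abs.hasSum fun n => ?_
    by_cases hn : n ∈ A <;> simp [hn]
  rw [achievementSet_eq_range, achievementSet_eq_range]
  refine hausdorffDist_le_of_mem_dist (tsum_nonneg fun n => abs_nonneg _) ?_ ?_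
  · rintro _ ⟨A, rfl⟩
    exact ⟨_, ⟨A, rfl⟩, key A⟩
  · rintro _ ⟨A, rfl⟩
    exact ⟨_, ⟨A, rfl⟩, dist_comm (α := ℝ) _ _ ▸ key A⟩

theorem tsum_indicator_Ici (hf : Summable f) (k : ℕ) :
    ∑' n, (Ici k).indicator f n = ∑' n, f n - ∑ n ∈ Finset.range k, f n := by
  rw [← hf.sum_add_tsum_compl (s := Finset.range k), tsum_subtype, Finset.coe_range, compl_Iio]
  ring

/-- The prefix sums of `f` climb from `0` to `∑' n, f n` in steps of size at most `r`. -/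
theorem hausdorffDist_achievementSet_Icc_le {r : ℝ} (hf0 : ∀ n, 0 ≤ f n) (hf : Summable f)
    (hfr : ∀ n, f n ≤ r) : hausdorffDist (achievementSet f) (Icc 0 (∑' n, f n)) ≤ r := by
  have hr : 0 ≤ r := (hf0 0).trans (hfr 0)
  refine hausdorffDist_le_of_mem_dist hr
    (fun x hx => ⟨x, achievementSet_subset_Icc hf0 hf hx, by simpa using hr⟩) fun t ht => ?_
  obtain htf | htf := ht.2.lt_or_eq
  · have hex : ∃ m, t < ∑ n ∈ Finset.range (m + 1), f n :=
      ((tendsto_add_atTop_iff_nat 1).2 hf.hasSum.tendsto_sum_nat |>.eventually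
        (lt_mem_nhds htf)).exists
    have hle : ∑ n ∈ Finset.range (Nat.find hex), f n ≤ t := by
      rcases h : Nat.find hex with _ | m
      · simpa using ht.1
      · exact not_lt.1 (Nat.find_min hex (h ▸ Nat.lt_succ_self m))
    have hlt := Nat.find_spec hex
    rw [Finset.sum_range_succ] at hlt
    refine ⟨_, sum_range_mem_achievementSet f (Nat.find hex), ?_⟩
    rw [Real.dist_eq, abs_of_nonneg (sub_nonneg.2 hle)]
    linarith [hfr (Nat.find hex)]
  · exact ⟨_, tsum_mem_achievementSet f, by simpa [htf] using hr⟩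

theorem achievementSet_comp_equiv (f : ℕ → ℝ) (e : ℕ ≃ ℕ) :
    achievementSet (f ∘ e) = achievementSet f := by
  rw [achievementSet_eq_range, achievementSet_eq_range,
    ← e.injective.preimage_surjective.range_comp]
  congr 1
  ext B
  simp only [Function.comp_apply, indicator_comp_right]
  exact e.tsum_eq (B.indicator f)

theorem exists_perm_antitone_comp {K : ℕ} (hf0 : ∀ n, 0 ≤ f n) (hfK : ∀ n, K ≤ n → f n = 0) :
    ∃ e : Equiv.Perm ℕ, Antitone (f ∘ e) := by
  set σ := Tuple.sort fun i : Fin K => -f i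
  have hσ : Monotone fun i => -f (σ i) := Tuple.monotone_sort (fun i : Fin K => -f i)
  refine ⟨σ.extendDomain Fin.equivSubtype, fun j j' hjj' => ?_⟩
  by_cases hj' : j' < K
  · simp only [Function.comp_apply,
      Equiv.Perm.extendDomain_apply_subtype σ Fin.equivSubtype (p := (· < K)) hj',
      Equiv.Perm.extendDomain_apply_subtype σ Fin.equivSubtype (p := (· < K)) (hjj'.trans_lt hj')]
    simpa using hσ (show (⟨j, hjj'.trans_lt hj'⟩ : Fin K) ≤ ⟨j', hj'⟩ from hjj')
  · rw [Function.comp_apply, Function.comp_apply,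
      Equiv.Perm.extendDomain_apply_not_subtype σ Fin.equivSubtype (p := (· < K)) hj',
      hfK j' (not_lt.1 hj')]
    exact hf0 _

theorem exists_antitone_hausdorffDist_achievementSet_lt (hf0 : ∀ n, 0 ≤ f n) (hf : Summable f)
    {ε : ℝ} (hε : 0 < ε) :
    ∃ p : ℕ → ℝ, (∀ n, 0 ≤ p n) ∧ Antitone p ∧ Summable p ∧ ∑' n, p n ≤ ∑' n, f n ∧
      hausdorffDist (achievementSet f) (achievementSet p) < ε := by
  obtain ⟨K, hK⟩ : ∃ K, ∑' n, f n - ∑ n ∈ Finset.range K, f n < ε := by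
    have := hf.hasSum.tendsto_sum_nat.const_sub (∑' n, f n)
    rw [sub_self] at this
    exact (this.eventually (gt_mem_nhds hε)).exists
  set g := (Iio K).indicator f
  have hg0 : ∀ n, 0 ≤ g n := fun n => indicator_nonneg (fun n _ => hf0 n) n
  have hg : Summable g := hf.indicator _
  obtain ⟨e, he⟩ := exists_perm_antitone_comp hg0 fun n hn =>
    indicator_of_notMem (s := Iio K) (not_lt.2 hn) f
  refine ⟨g ∘ e, fun n => hg0 _, he, e.summable_iff.2 hg, ?_, ?_⟩
  · rw [show ∑' n, (g ∘ e) n = ∑' n, g n from e.tsum_eq g]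
    exact hg.tsum_le_tsum (fun n => indicator_le_self' (fun n _ => hf0 n) n) hf
  · have hfg : ∀ n, |f n - g n| = (Ici K).indicator f n := fun n => by
      rw [← Pi.sub_apply f g, ← indicator_compl, compl_Iio,
        abs_of_nonneg (indicator_nonneg (fun n _ => hf0 n) n)]
    calc hausdorffDist (achievementSet f) (achievementSet (g ∘ e))
        ≤ ∑' n, |f n - g n| := achievementSet_comp_equiv g e ▸ hausdorffDist_achievementSet_le hf hg
      _ = ∑' n, f n - ∑ n ∈ Finset.range K, f n := by simp only [hfg, tsum_indicator_Ici hf]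
      _ < ε := hK

noncomputable def greedySum (f : ℕ → ℝ) (t : ℝ) : ℕ → ℝ
  | 0 => 0
  | n + 1 => if greedySum f t n + f n ≤ t then greedySum f t n + f n else greedySum f t n

theorem greedySum_eq_sum (f : ℕ → ℝ) (t : ℝ) (n : ℕ) :
    greedySum f t n = ∑ k ∈ Finset.range n, {k | greedySum f t k + f k ≤ t}.indicator f k := by
  induction n with
  | zero => rfl
  | succ n ih =>
    rw [Finset.sum_range_succ, ← ih, greedySum]
    by_cases h : greedySum f t n + f n ≤ t <;> simp [h]

theorem greedySum_le {t : ℝ} (ht : 0 ≤ t) (n : ℕ) : greedySum f t n ≤ t := by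
  induction n with
  | zero => exact ht
  | succ n ih => rw [greedySum]; split_ifs with h <;> assumption

theorem sub_greedySum_le_tsum_tail (hf : Summable f)
    (hft : ∀ n, f n ≤ ∑' k, f (k + (n + 1))) {t : ℝ} (ht : t ≤ ∑' n, f n) (n : ℕ) :
    t - greedySum f t n ≤ ∑' k, f (k + n) := by
  induction n with
  | zero => simpa [greedySum] using ht
  | succ n ih =>
    have hsplit : ∑' k, f (k + n) = f n + ∑' k, f (k + (n + 1)) := by
      rw [((summable_nat_add_iff n).2 hf).tsum_eq_zero_add, zero_add]
      simp only [add_right_comm _ 1 n, add_assoc]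
    rw [greedySum]
    split_ifs with h
    · linarith
    · linarith [hft n]

/-- Kakeya's theorem, by the greedy expansion. -/
theorem achievementSet_eq_Icc (hf0 : ∀ n, 0 ≤ f n) (hf : Summable f)
    (hft : ∀ n, f n ≤ ∑' k, f (k + (n + 1))) : achievementSet f = Icc 0 (∑' n, f n) := by
  refine (achievementSet_subset_Icc hf0 hf).antisymm fun t ht => ?_
  set A := {k | greedySum f t k + f k ≤ t}
  have hlim : Tendsto (greedySum f t) atTop (𝓝 (∑' n, A.indicator f n)) :=
    (hf.indicator A).hasSum.tendsto_sum_nat.congr fun n => (greedySum_eq_sum f t n).symm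
  have hle : ∑' n, A.indicator f n ≤ t :=
    le_of_tendsto' hlim (greedySum_le ht.1)
  have hge : t - ∑' n, A.indicator f n ≤ 0 :=
    le_of_tendsto_of_tendsto' (tendsto_const_nhds.sub hlim) (tendsto_sum_nat_add f)
      (sub_greedySum_le_tsum_tail hf hft ht.2)
  rw [achievementSet_eq_range]
  exact ⟨A, by linarith⟩

theorem achievementSet_geometric {δ : ℝ} (hδ : 0 ≤ δ) :
    achievementSet (fun n => δ / 2 / 2 ^ n) = Icc 0 δ := by
  rw [achievementSet_eq_Icc (fun n => by positivity) (hasSum_geometric_two' δ).summable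
    fun n => le_of_eq ?_, tsum_geometric_two']
  rw [← tsum_geometric_two' (δ / 2 / 2 ^ n)]
  congr 1; ext k
  rw [pow_add, pow_add]
  ring

def interleave (b g : ℕ → ℝ) (n : ℕ) : ℝ := if n % 2 = 0 then b (n / 2) else g (n / 2)

@[simp]
theorem interleave_two_mul (b g : ℕ → ℝ) (k : ℕ) : interleave b g (2 * k) = b k := by
  simp [interleave]

@[simp]
theorem interleave_two_mul_add_one (b g : ℕ → ℝ) (k : ℕ) : interleave b g (2 * k + 1) = g k := by
  rw [interleave, if_neg (by omega), show (2 * k + 1) / 2 = k by omega]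

theorem hasSum_interleave {b g : ℕ → ℝ} {x y : ℝ} (hb : HasSum b x) (hg : HasSum g y) :
    HasSum (interleave b g) (x + y) :=
  HasSum.even_add_odd (by simpa using hb) (by simpa using hg)

theorem achievementSet_interleave {b g : ℕ → ℝ} (hb : Summable b) (hg : Summable g) :
    achievementSet (interleave b g) = achievementSet b + achievementSet g := by
  have key : ∀ C : Set ℕ, ∑' n, C.indicator (interleave b g) n =
      ∑' m, {m | 2 * m ∈ C}.indicator b m + ∑' m, {m | 2 * m + 1 ∈ C}.indicator g m := by
    intro C
    have he : (fun k => C.indicator (interleave b g) (2 * k)) = {m | 2 * m ∈ C}.indicator b := by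
      funext k
      by_cases h : 2 * k ∈ C <;> simp [h]
    have ho : (fun k => C.indicator (interleave b g) (2 * k + 1)) =
        {m | 2 * m + 1 ∈ C}.indicator g := by
      funext k
      by_cases h : 2 * k + 1 ∈ C <;> simp [h]
    refine (HasSum.even_add_odd ?_ ?_).tsum_eq
    · rw [he]; exact (hb.indicator _).hasSum
    · rw [ho]; exact (hg.indicator _).hasSum
  simp only [achievementSet_eq_range]
  ext x
  constructor
  · rintro ⟨C, rfl⟩
    exact ⟨_, ⟨_, rfl⟩, _, ⟨_, rfl⟩, (key C).symm⟩
  · rintro ⟨_, ⟨A, rfl⟩, _, ⟨B, rfl⟩, rfl⟩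
    set C := {n | n % 2 = 0 ∧ n / 2 ∈ A ∨ n % 2 = 1 ∧ n / 2 ∈ B}
    have hA : {m | 2 * m ∈ C} = A := by ext m; simp [C]
    have hB : {m | 2 * m + 1 ∈ C} = B := by
      ext m; simp [C, show (2 * m + 1) / 2 = m by omega]
    exact ⟨C, (key C).trans (by rw [hA, hB])⟩

theorem achievementSet_add_Icc_mem_achvFamily {b : ℕ → ℝ} (hb0 : ∀ n, 0 ≤ b n)
    (hb : Summable b) {δ : ℝ} (hδ : 0 ≤ δ) (h1 : ∑' n, b n + δ ≤ 1) :
    achievementSet b + Icc 0 δ ∈ achvFamily := by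
  have hg := hasSum_geometric_two' δ
  have hc := hasSum_interleave hb.hasSum hg
  refine ⟨interleave b fun n => δ / 2 / 2 ^ n, fun n => ?_, hc.summable, hc.tsum_eq ▸ h1, ?_⟩
  · unfold interleave; split_ifs; exacts [hb0 _, by positivity]
  · rw [achievementSet_interleave hb hg.summable, achievementSet_geometric hδ]

theorem hausdorffDist_achievementSet_add_Icc_le_of_forall_le {r s δ : ℝ} (hf0 : ∀ n, 0 ≤ f n)
    (hf : Summable f) (hg0 : ∀ n, 0 ≤ g n) (hg : Summable g) (hfr : ∀ n, f n ≤ r)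
    (hgs : ∀ n, g n ≤ s) (hδ : 0 ≤ δ) :
    hausdorffDist (achievementSet f) (achievementSet g + Icc 0 δ) ≤
      r + |∑' n, f n - (∑' n, g n + δ)| + s := by
  have hfsum : 0 ≤ ∑' n, f n := tsum_nonneg hf0
  have hgsum : 0 ≤ ∑' n, g n := tsum_nonneg hg0
  have hgδ : hausdorffDist (Icc 0 (∑' n, g n + δ)) (achievementSet g + Icc 0 δ) ≤ s := by
    rw [show Icc 0 (∑' n, g n + δ) = Icc 0 (∑' n, g n) + Icc 0 δ by
      rw [Icc_add_Icc hgsum hδ, zero_add]]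
    refine (hausdorffDist_add_add_le (hausdorffEDist_ne_top_of_nonempty_of_bounded
      (nonempty_Icc.2 hgsum) (achievementSet_nonempty g) (isBounded_Icc _ _)
      (isBounded_achievementSet hg0 hg))
      (hausdorffEDist_self.trans_ne ENNReal.zero_ne_top)).trans ?_
    rw [hausdorffDist_self_zero, add_zero, hausdorffDist_comm]
    exact hausdorffDist_achievementSet_Icc_le hg0 hg hgs
  have h1 := hausdorffDist_triangle (u := achievementSet g + Icc 0 δ)
    (hausdorffEDist_ne_top_of_nonempty_of_bounded (achievementSet_nonempty f)
      (nonempty_Icc.2 hfsum) (isBounded_achievementSet hf0 hf) (isBounded_Icc _ _))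
  have h2 := hausdorffDist_triangle (u := achievementSet g + Icc 0 δ)
    (hausdorffEDist_ne_top_of_nonempty_of_bounded (nonempty_Icc.2 hfsum)
      (nonempty_Icc.2 (add_nonneg hgsum hδ)) (isBounded_Icc _ _) (isBounded_Icc _ _))
  linarith [hausdorffDist_achievementSet_Icc_le hf0 hf hfr,
    hausdorffDist_Icc_zero_le hfsum (add_nonneg hgsum hδ)]

theorem indicator_Ici_le_of_antitone (hfa : Antitone f) (hf0 : ∀ n, 0 ≤ f n) (k n : ℕ) :
    (Ici k).indicator f n ≤ f k := by
  by_cases hn : n ∈ Ici k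
  · rw [indicator_of_mem hn]; exact hfa hn
  · rw [indicator_of_notMem hn]; exact hf0 k

theorem hausdorffDist_achievementSet_add_Icc_le_of_antitone {P b : ℕ → ℝ} (hP0 : ∀ n, 0 ≤ P n)
    (hPa : Antitone P) (hP : Summable P) (hb0 : ∀ n, 0 ≤ b n) (hba : Antitone b)
    (hb : Summable b) {δ : ℝ} (hδ : 0 ≤ δ) (k : ℕ) :
    hausdorffDist (achievementSet P) (achievementSet b + Icc 0 δ) ≤
      ∑ j ∈ Finset.range k, |P j - b j| +
        (P k + |∑' j, (Ici k).indicator P j - (∑' j, (Ici k).indicator b j + δ)| + b k) := by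
  have hfin := @hausdorffEDist_ne_top_of_nonempty_of_bounded ℝ _
  have hP0' := fun s : Set ℕ => indicator_nonneg (s := s) fun n _ => hP0 n
  have hb0' := fun s : Set ℕ => indicator_nonneg (s := s) fun n _ => hb0 n
  rw [achievementSet_eq_add_indicator_compl hP (Iio k),
    achievementSet_eq_add_indicator_compl hb (Iio k), add_assoc, compl_Iio]
  refine (hausdorffDist_add_add_le ?_ ?_).trans (add_le_add ?_ ?_)
  · exact hfin (achievementSet_nonempty _) (achievementSet_nonempty _)
      (isBounded_achievementSet (hP0' _) (hP.indicator _))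
      (isBounded_achievementSet (hb0' _) (hb.indicator _))
  · exact hfin (achievementSet_nonempty _) ((achievementSet_nonempty _).add (nonempty_Icc.2 hδ))
      (isBounded_achievementSet (hP0' _) (hP.indicator _))
      ((isBounded_achievementSet (hb0' _) (hb.indicator _)).add (isBounded_Icc _ _))
  · refine (hausdorffDist_achievementSet_le (hP.indicator _) (hb.indicator _)).trans_eq ?_
    rw [sum_eq_tsum_indicator, Finset.coe_range]
    congr 1; funext n
    by_cases hn : n ∈ Iio k <;> simp [hn]
  · exact hausdorffDist_achievementSet_add_Icc_le_of_forall_le (hP0' _) (hP.indicator _) (hb0' _)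
      (hb.indicator _)
      (indicator_Ici_le_of_antitone hPa hP0 k) (indicator_Ici_le_of_antitone hba hb0 k) hδ

section Limit

variable {P : ℕ → ℕ → ℝ} {b : ℕ → ℝ} {τ : ℝ}

theorem summable_and_tsum_le_of_tendsto (hP0 : ∀ i j, 0 ≤ P i j) (hP : ∀ i, Summable (P i))
    (hPb : ∀ j, Tendsto (fun i => P i j) atTop (𝓝 (b j)))
    (hPτ : Tendsto (fun i => ∑' j, P i j) atTop (𝓝 τ)) : Summable b ∧ ∑' j, b j ≤ τ := by
  have hsum : ∀ m, ∑ j ∈ Finset.range m, b j ≤ τ := fun m =>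
    le_of_tendsto_of_tendsto' (tendsto_finsetSum _ fun j _ => hPb j) hPτ
      fun i => (hP i).sum_le_tsum _ fun j _ => hP0 i j
  have hb := summable_of_sum_range_le (fun j => ge_of_tendsto' (hPb j) fun i => hP0 i j) hsum
  exact ⟨hb, hb.tsum_le_of_sum_range_le hsum⟩

theorem tendsto_hausdorffDist_achievementSet_add_Icc (hP0 : ∀ i j, 0 ≤ P i j)
    (hPa : ∀ i, Antitone (P i)) (hP : ∀ i, Summable (P i)) (hb0 : ∀ j, 0 ≤ b j)
    (hb : Summable b) (hbτ : ∑' j, b j ≤ τ)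
    (hPb : ∀ j, Tendsto (fun i => P i j) atTop (𝓝 (b j)))
    (hPτ : Tendsto (fun i => ∑' j, P i j) atTop (𝓝 τ)) :
    Tendsto (fun i => hausdorffDist (achievementSet (P i))
      (achievementSet b + Icc 0 (τ - ∑' j, b j))) atTop (𝓝 0) := by
  have hba : Antitone b := fun j j' h => le_of_tendsto_of_tendsto' (hPb j') (hPb j) fun i => hPa i h
  have hbound : ∀ k, Tendsto (fun i => ∑ j ∈ Finset.range k, |P i j - b j| + (P i k +
      |∑' j, (Ici k).indicator (P i) j - (∑' j, (Ici k).indicator b j + (τ - ∑' j, b j))| + b k))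
      atTop (𝓝 (2 * b k)) := by
    intro k
    simp only [tsum_indicator_Ici (hP _), tsum_indicator_Ici hb]
    have hhead := tendsto_finsetSum (Finset.range k) fun j _ => hPb j
    have hdiff := tendsto_finsetSum (Finset.range k) fun j _ => ((hPb j).sub_const (b j)).abs
    have htail := ((hPτ.sub hhead).sub_const
      (∑' j, b j - ∑ j ∈ Finset.range k, b j + (τ - ∑' j, b j))).abs
    convert hdiff.add (((hPb k).add htail).add_const (b k)) using 2
    rw [show ∀ x y z : ℝ, x - y - (z - y + (x - z)) = 0 by intros; ring]
    simp only [sub_self, abs_zero, Finset.sum_const_zero]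
    ring
  refine tendsto_order.2 ⟨fun a ha => Eventually.of_forall fun i =>
    ha.trans_le hausdorffDist_nonneg, fun a ha => ?_⟩
  obtain ⟨k, hk⟩ := ((hb.tendsto_atTop_zero.const_mul 2).eventually
    (gt_mem_nhds (by rwa [mul_zero]))).exists
  filter_upwards [(hbound k).eventually (gt_mem_nhds hk)] with i hi
  exact (hausdorffDist_achievementSet_add_Icc_le_of_antitone (hP0 i) (hPa i) (hP i) hb0 hba hb
    (sub_nonneg.2 hbτ) k).trans_lt hi

end Limit

theorem exists_antitone_tendsto_hausdorffDist {E : ℕ → Set ℝ} (hE : ∀ n, E n ∈ achvFamily)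
    {S : Set ℝ} (hES : Tendsto (fun n => hausdorffDist (E n) S) atTop (𝓝 0)) :
    ∃ p : ℕ → ℕ → ℝ, (∀ n j, 0 ≤ p n j) ∧ (∀ n, Antitone (p n)) ∧ (∀ n, Summable (p n)) ∧
      (∀ n, ∑' j, p n j ≤ 1) ∧
      Tendsto (fun n => hausdorffDist (achievementSet (p n)) S) atTop (𝓝 0) := by
  have : ∀ n : ℕ, ∃ p : ℕ → ℝ, (∀ j, 0 ≤ p j) ∧ Antitone p ∧ Summable p ∧ ∑' j, p j ≤ 1 ∧
      hausdorffDist (achievementSet p) S ≤ 1 / (n + 1) + hausdorffDist (E n) S := by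
    intro n
    obtain ⟨a, ha0, ha, ha1, hEa⟩ := hE n
    obtain ⟨p, hp0, hpa, hp, hpa1, hd⟩ :=
      exists_antitone_hausdorffDist_achievementSet_lt ha0 ha (ε := 1 / (n + 1)) (by positivity)
    refine ⟨p, hp0, hpa, hp, hpa1.trans ha1, ?_⟩
    have htri := hausdorffDist_triangle (u := S) <| hausdorffEDist_ne_top_of_nonempty_of_bounded
      (achievementSet_nonempty p) (achievementSet_nonempty a) (isBounded_achievementSet hp0 hp)
      (isBounded_achievementSet ha0 ha)
    rw [hausdorffDist_comm] at hd
    rw [hEa]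
    linarith
  choose p hp0 hpa hp hp1 hd using this
  refine ⟨p, hp0, hpa, hp, hp1, squeeze_zero (fun n => hausdorffDist_nonneg) hd ?_⟩
  simpa using tendsto_one_div_add_atTop_nhds_zero_nat.add hES

theorem exists_subseq_tendsto_of_tsum_le_one {p : ℕ → ℕ → ℝ} (hp0 : ∀ n j, 0 ≤ p n j)
    (hp : ∀ n, Summable (p n)) (hp1 : ∀ n, ∑' j, p n j ≤ 1) :
    ∃ (φ : ℕ → ℕ) (τ : ℝ) (b : ℕ → ℝ), StrictMono φ ∧
      Tendsto (fun i => ∑' j, p (φ i) j) atTop (𝓝 τ) ∧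
      ∀ j, Tendsto (fun i => p (φ i) j) atTop (𝓝 (b j)) := by
  have hmem : ∀ n, ((∑' j, p n j, p n) : ℝ × (ℕ → ℝ)) ∈ Icc 0 1 := fun n =>
    ⟨⟨tsum_nonneg (hp0 n), fun j => hp0 n j⟩,
      ⟨hp1 n, fun j => ((hp n).le_tsum j fun k _ => hp0 n k).trans (hp1 n)⟩⟩
  obtain ⟨⟨τ, b⟩, -, φ, hφ, hlim⟩ := isCompact_Icc.tendsto_subseq hmem
  exact ⟨φ, τ, b, hφ, hlim.fst_nhds, tendsto_pi_nhds.1 hlim.snd_nhds⟩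

theorem eq_of_tendsto_hausdorffDist {ι α : Type*} [PseudoMetricSpace α] {l : Filter ι} [l.NeBot]
    {X : ι → Set α} {S T : Set α} (hS : IsClosed S) (hT : IsClosed T)
    (hST : hausdorffEDist S T ≠ ⊤) (hSX : ∀ i, hausdorffEDist S (X i) ≠ ⊤)
    (hXS : Tendsto (fun i => hausdorffDist (X i) S) l (𝓝 0))
    (hXT : Tendsto (fun i => hausdorffDist (X i) T) l (𝓝 0)) : S = T := by
  refine (hS.hausdorffDist_zero_iff_eq hT hST).1 (le_antisymm ?_ hausdorffDist_nonneg)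
  refine ge_of_tendsto (by simpa using hXS.add hXT) (Eventually.of_forall fun i => ?_)
  rw [← hausdorffDist_comm (s := S)]
  exact hausdorffDist_triangle (hSX i)

theorem achvFamily_closed_general (Eseq : ℕ → Set ℝ) (hE : ∀ n, Eseq n ∈ achvFamily)
    (S : Set ℝ) (hSne : S.Nonempty) (hSc : IsCompact S)
    (hconv : Tendsto (fun n => hausdorffDist (Eseq n) S) atTop (nhds 0)) :
    S ∈ achvFamily := by
  obtain ⟨p, hp0, hpa, hp, hp1, hpS⟩ := exists_antitone_tendsto_hausdorffDist hE hconv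
  obtain ⟨φ, τ, b, hφ, hτ, hb⟩ := exists_subseq_tendsto_of_tsum_le_one hp0 hp hp1
  obtain ⟨hbs, hbτ⟩ :=
    summable_and_tsum_le_of_tendsto (fun i => hp0 (φ i)) (fun i => hp (φ i)) hb hτ
  have hb0 : ∀ j, 0 ≤ b j := fun j => ge_of_tendsto' (hb j) fun i => hp0 _ j
  have hδ : 0 ≤ τ - ∑' j, b j := sub_nonneg.2 hbτ
  have hτ1 : τ ≤ 1 := le_of_tendsto' hτ fun i => hp1 _
  set T := achievementSet b + Icc 0 (τ - ∑' j, b j)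
  have hTc : IsCompact T := (isCompact_achievementSet hbs).add isCompact_Icc
  have hTne : T.Nonempty := (achievementSet_nonempty b).add (nonempty_Icc.2 hδ)
  suffices S = T from this ▸ achievementSet_add_Icc_mem_achvFamily hb0 hbs hδ (by linarith)
  refine eq_of_tendsto_hausdorffDist hSc.isClosed hTc.isClosed
    (hausdorffEDist_ne_top_of_nonempty_of_bounded hSne hTne hSc.isBounded hTc.isBounded)
    (fun i => hausdorffEDist_ne_top_of_nonempty_of_bounded hSne (achievementSet_nonempty _)
      hSc.isBounded (isBounded_achievementSet (hp0 (φ i)) (hp (φ i))))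
    (hpS.comp hφ.tendsto_atTop) ?_
  exact tendsto_hausdorffDist_achievementSet_add_Icc (fun i => hp0 (φ i)) (fun i => hpa (φ i))
    (fun i => hp (φ i)) hb0 hbs hbτ hb hτ

theorem achvFamily_closed (Eseq : ℕ → Set ℝ) (hE : ∀ n, Eseq n ∈ achvFamily)
    (S : Set ℝ) (hSne : S.Nonempty) (hSc : IsCompact S) (hSsub : S ⊆ Set.Icc 0 1)
    (hconv : Tendsto (fun n => hausdorffDist (Eseq n) S) atTop (nhds 0)) :
    S ∈ achvFamily :=
  achvFamily_closed_general Eseq hE S hSne hSc hconv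
end

section
/- The family 𝒜 of achievement sets is nowhere dense in the hyperspace K₀([0,1]) of all nonempty compact subsets of [0,1] that contain 0, equipped with the Hausdorff metric. -/
open TopologicalSpace

/-- The hyperspace of nonempty compact subsets of `[0,1]` containing `0`, with the
Hausdorff metric (as a subspace of the space of nonempty compact subsets of `ℝ`). -/
def K0 : Type :=
  {K : NonemptyCompacts ℝ // (K : Set ℝ) ⊆ Set.Icc 0 1 ∧ (0 : ℝ) ∈ (K : Set ℝ)}

noncomputable instance : MetricSpace K0 := by unfold K0; infer_instance

/-!
An achievement set `E(a)` has the largest element `σ = ∑ aₙ` and is mapped onto itself by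
`x ↦ σ - x` (pass from an index set to its complement). This symmetry survives Hausdorff limits:
if `K` has maximum `m` and `x ∈ K`, then `m - x` lies within three times the Hausdorff distance
from `K` to any symmetric set. So the symmetric sets form a closed family, and it has empty
interior in `K0` because adding one well-chosen small point to a finite net of `K` breaks the
symmetry.
-/

open Metric Set

def IsMaxSymmetric (E : Set ℝ) : Prop :=
  ∃ σ, IsGreatest E σ ∧ ∀ x ∈ E, σ - x ∈ E

lemma achievementSet_isMaxSymmetric {a : ℕ → ℝ} (ha : ∀ n, 0 ≤ a n) (hs : Summable a) :
    IsMaxSymmetric (achievementSet a) := by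
  refine ⟨∑' n, a n, ⟨⟨univ, (tsum_univ a).symm⟩, ?_⟩, ?_⟩ <;> rintro _ ⟨A, rfl⟩
  · show _ ≤ _
    have hcompl : 0 ≤ ∑' n : ↥Aᶜ, a n := tsum_nonneg fun n => ha n
    linarith [hs.tsum_subtype_add_tsum_subtype_compl A]
  · exact ⟨Aᶜ, by linarith [hs.tsum_subtype_add_tsum_subtype_compl A]⟩

lemma infDist_sub_le_three_mul_hausdorffDist {K E : Set ℝ} {m x : ℝ} (hm : IsGreatest K m)
    (hx : x ∈ K) (hE : IsMaxSymmetric E) (hfin : hausdorffEDist K E ≠ ⊤) :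
    infDist (m - x) K ≤ 3 * hausdorffDist K E := by
  obtain ⟨σ, ⟨hσE, hσmax⟩, hrefl⟩ := hE
  refine le_of_forall_pos_lt_add fun ε hε => ?_
  have hr : hausdorffDist K E < hausdorffDist K E + ε / 3 := by linarith
  set r := hausdorffDist K E + ε / 3
  obtain ⟨y, hyE, hmy⟩ := exists_dist_lt_of_hausdorffDist_lt hm.1 hr hfin
  obtain ⟨w', hw'K, hσw'⟩ := exists_dist_lt_of_hausdorffDist_lt' hσE hr hfin
  obtain ⟨z, hzE, hxz⟩ := exists_dist_lt_of_hausdorffDist_lt hx hr hfin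
  obtain ⟨w, hwK, hw⟩ := exists_dist_lt_of_hausdorffDist_lt' (hrefl z hzE) hr hfin
  have hσ_near_m : |m - σ| < r := by
    rw [Real.dist_eq] at hmy hσw'
    have := hσmax hyE
    have := hm.2 hw'K
    rw [abs_lt] at hmy hσw' ⊢
    constructor <;> linarith
  calc infDist (m - x) K ≤ dist (m - x) w := infDist_le_dist_of_mem hwK
    _ = |(m - σ) + (z - x) + (σ - z - w)| := by rw [Real.dist_eq]; ring_nf
    _ ≤ |m - σ| + |z - x| + |σ - z - w| := abs_add_three _ _ _
    _ < r + r + r := by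
      rw [Real.dist_eq] at hxz hw
      gcongr <;> rwa [abs_sub_comm]
    _ = 3 * hausdorffDist K E + ε := by ring

lemma isClosed_setOf_isMaxSymmetric :
    IsClosed {K : NonemptyCompacts ℝ | IsMaxSymmetric (K : Set ℝ)} := by
  rw [← isOpen_compl_iff, Metric.isOpen_iff]
  intro K hK
  obtain ⟨m, hm⟩ := K.isCompact.exists_isGreatest K.nonempty
  obtain ⟨x, hxK, hmx⟩ : ∃ x ∈ (K : Set ℝ), m - x ∉ (K : Set ℝ) := by
    by_contra! h
    exact hK ⟨m, hm, h⟩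
  have hpos : 0 < infDist (m - x) K :=
    (K.isCompact.isClosed.notMem_iff_infDist_pos K.nonempty).1 hmx
  refine ⟨infDist (m - x) K / 3, by positivity, fun E hE hsymm => ?_⟩
  rw [mem_ball, dist_comm, NonemptyCompacts.dist_eq] at hE
  have := infDist_sub_le_three_mul_hausdorffDist hm hxK hsymm
    (hausdorffEDist_ne_top_of_nonempty_of_bounded K.nonempty E.nonempty
      K.isCompact.isBounded E.isCompact.isBounded)
  linarith

lemma exists_not_isMaxSymmetric_insert {F : Set ℝ} (hF : F.Finite) {m : ℝ} (hm : IsGreatest F m)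
    (hm0 : 0 < m) {ε : ℝ} (hε : 0 < ε) :
    ∃ p ∈ Ioo 0 (min ε (m / 2)), ¬IsMaxSymmetric (insert p F) := by
  -- `m` stays the maximum of `insert p F`, and choosing `m - p ∉ F` leaves `p` without a mirror.
  obtain ⟨p, hpI, hpF⟩ :=
    ((Ioo_infinite (lt_min hε (half_pos hm0))).sdiff (hF.image (m - ·))).nonempty
  refine ⟨p, hpI, ?_⟩
  rintro ⟨σ, hσ, hrefl⟩
  have hpm : p < m / 2 := hpI.2.trans_le (min_le_right _ _)
  have hm' : IsGreatest (insert p F) m :=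
    ⟨mem_insert_of_mem p hm.1, forall_mem_insert.2 ⟨by linarith, hm.2⟩⟩
  obtain rfl := hσ.unique hm'
  rcases hrefl p (mem_insert p F) with h | h
  · linarith
  · exact hpF ⟨σ - p, h, sub_sub_cancel σ p⟩

lemma exists_finite_not_isMaxSymmetric_hausdorffDist_lt {K : Set ℝ} (hK : IsCompact K)
    (hK01 : K ⊆ Icc 0 1) (hK0 : 0 ∈ K) {ε : ℝ} (hε : 0 < ε) :
    ∃ F : Set ℝ, F.Finite ∧ F ⊆ Icc 0 1 ∧ 0 ∈ F ∧ ¬IsMaxSymmetric F ∧ hausdorffDist K F < ε := by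
  set e := min (ε / 2) 1
  have he : 0 < e := lt_min (half_pos hε) one_pos
  obtain ⟨N, hNK, hNfin, hKN⟩ := hK.finite_cover_balls he
  set F₀ := insert e (insert 0 N)
  have hF₀fin : F₀.Finite := (hNfin.insert 0).insert e
  obtain ⟨m, hm⟩ := hF₀fin.isCompact.exists_isGreatest (insert_nonempty e _)
  have hem : e ≤ m := hm.2 (mem_insert e _)
  obtain ⟨p, hp, hasymm⟩ := exists_not_isMaxSymmetric_insert hF₀fin hm (he.trans_le hem) he
  have hpe : p < e := hp.2.trans_le (min_le_left _ _)
  have hnear_zero : ∀ y ∈ Icc 0 e, ∃ x ∈ K, dist y x ≤ e := fun y hy =>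
    ⟨0, hK0, by rw [Real.dist_eq, sub_zero, abs_of_nonneg hy.1]; exact hy.2⟩
  refine ⟨insert p F₀, hF₀fin.insert p, ?_, mem_insert_of_mem _ (mem_insert_of_mem _
    (mem_insert 0 N)), hasymm, ?_⟩
  · rintro y (rfl | rfl | rfl | hy)
    · exact ⟨hp.1.le, by linarith [min_le_right (ε / 2) 1]⟩
    · exact ⟨he.le, min_le_right _ _⟩
    · exact ⟨le_rfl, zero_le_one⟩
    · exact hK01 (hNK hy)
  · refine (hausdorffDist_le_of_mem_dist he.le (fun x hx => ?_) fun y hy => ?_).trans_lt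
      ((min_le_left _ _).trans_lt (half_lt_self hε))
    · obtain ⟨y, hyN, hxy⟩ := mem_iUnion₂.1 (hKN hx)
      exact ⟨y, mem_insert_of_mem _ (mem_insert_of_mem _ (mem_insert_of_mem _ hyN)), hxy.le⟩
    · rcases hy with rfl | rfl | rfl | hy
      · exact hnear_zero _ ⟨hp.1.le, hpe.le⟩
      · exact hnear_zero _ ⟨he.le, le_rfl⟩
      · exact hnear_zero _ ⟨le_rfl, he.le⟩
      · exact ⟨y, hNK hy, by rw [dist_self]; exact he.le⟩

lemma dense_setOf_not_isMaxSymmetric : Dense {K : K0 | ¬IsMaxSymmetric (K.1 : Set ℝ)} := by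
  refine Metric.dense_iff.2 fun K ε hε => ?_
  obtain ⟨F, hFfin, hF01, hF0, hasymm, hKF⟩ :=
    exists_finite_not_isMaxSymmetric_hausdorffDist_lt K.1.isCompact K.2.1 K.2.2 hε
  exact ⟨⟨⟨⟨F, hFfin.isCompact⟩, ⟨0, hF0⟩⟩, hF01, hF0⟩, mem_ball'.2 hKF, hasymm⟩

theorem achvFamily_nowhereDense :
    IsNowhereDense {K : K0 | ((K.1 : Set ℝ)) ∈ achvFamily} := by
  have hclosed : IsClosed {K : K0 | IsMaxSymmetric (K.1 : Set ℝ)} :=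
    isClosed_setOf_isMaxSymmetric.preimage continuous_subtype_val
  have hsymm : IsNowhereDense {K : K0 | IsMaxSymmetric (K.1 : Set ℝ)} :=
    hclosed.isNowhereDense_iff.2 <|
      interior_eq_empty_iff_dense_compl.2 dense_setOf_not_isMaxSymmetric
  refine hsymm.mono ?_
  rintro K ⟨a, ha, hs, -, hE⟩
  show IsMaxSymmetric _
  rw [hE]
  exact achievementSet_isMaxSymmetric ha hs
end
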